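/- arXiv:2505.20062 — 2 statements merged into one kernel-verified Lean document; each statement's English description precedes it below -/
import Mathlib

section
/- Let R_S, R_F ∈ (−1, 1), and let M be the 2×2 real matrix with tr(M) = R_S + R_F and det(M) = R_S·R_F − k(1−R_S)(1−R_F) for a real parameter k. Then M satisfies the three discrete Routh–Hurwitz conditions (1 + tr(M) + det(M) > 0, det(M) < 1, 1 − tr(M) + det(M) > 0) if and only if k lies in the open interval ((R_S R_F − 1)/((1−R_S)(1−R_F)), (1+R_S)(1+R_F)/((1−R_S)(1−R_F)) ) intersected with (−∞, 1). -/
/-- Linear stability of multirate forward Euler with constant interpolation: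
the discrete Routh–Hurwitz conditions for the transfer matrix hold iff the coupling
coefficient k lies in the stated interval intersected with (-∞, 1). -/
theorem mrfe_stability_iff (RS RF k : ℝ)
    (hRS : RS ∈ Set.Ioo (-1 : ℝ) 1) (hRF : RF ∈ Set.Ioo (-1 : ℝ) 1) :
    (1 + (RS + RF) + (RS * RF - k * (1 - RS) * (1 - RF)) > 0 ∧
      RS * RF - k * (1 - RS) * (1 - RF) < 1 ∧
      1 - (RS + RF) + (RS * RF - k * (1 - RS) * (1 - RF)) > 0) ↔
    ((RS * RF - 1) / ((1 - RS) * (1 - RF)) < k ∧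
      k < (1 + RS) * (1 + RF) / ((1 - RS) * (1 - RF)) ∧ k < 1) := by
  obtain ⟨h1, h2⟩ := hRS
  obtain ⟨h3, h4⟩ := hRF
  have hD : (0:ℝ) < (1 - RS) * (1 - RF) := by nlinarith
  rw [div_lt_iff₀ hD, lt_div_iff₀ hD]
  constructor
  · rintro ⟨a, b, c⟩
    refine ⟨by nlinarith, by nlinarith, by nlinarith⟩
  · rintro ⟨a, b, c⟩
    refine ⟨by nlinarith, by nlinarith, by nlinarith⟩
end

section
/- For real ω, |1 − 2φ₁(iω)| can be both less than 1 and greater than 1: specifically, 1 − 2φ₁(0) = −1 (modulus 1), and there exists ω ≠ 0 with |1 − 2φ₁(iω)| > 1, where φ₁(iω) = (e^{iω} − 1)/(iω). -/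
/-!
Writing e^{iω} = cos ω + i sin ω gives 1 − 2φ₁(iω) = (1 − 2 sin ω / ω) + 2i (cos ω − 1) / ω.
At ω = π this is 1 − (4/π) i: real part 1 and nonzero imaginary part, so its modulus exceeds 1.
-/

open Complex

theorem one_sub_two_mul_exp_I_mul_sub_one_div {ω : ℝ} (hω : ω ≠ 0) :
    1 - 2 * ((exp (I * ω) - 1) / (I * ω)) =
      ((1 - 2 * Real.sin ω / ω : ℝ) : ℂ) + ((2 * (Real.cos ω - 1) / ω : ℝ) : ℂ) * I := by
  have hω' : (ω : ℂ) ≠ 0 := ofReal_ne_zero.2 hω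
  rw [mul_comm I, exp_mul_I, ← ofReal_cos, ← ofReal_sin]
  push_cast
  field_simp
  ring_nf
  simp only [I_sq]
  ring

theorem one_lt_norm_one_add_mul_I {t : ℝ} (ht : t ≠ 0) : 1 < ‖(1 : ℂ) + t * I‖ := by
  rw [← ofReal_one, norm_add_mul_I, Real.lt_sqrt zero_le_one]
  have := pow_pos (abs_pos.2 ht) 2
  rw [sq_abs] at this
  linarith

/-- The stiff slow limit of the MRI trapezoidal stability function with purely
imaginary fast eigenvalue: 1 − 2φ₁(0) = −1 has modulus 1, and there is ω ≠ 0 with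
|1 − 2φ₁(iω)| > 1. -/
theorem mri_trapezoidal_not_unconditionally_stable (φ1 : ℂ → ℂ)
    (h1 : ∀ z : ℂ, z ≠ 0 → φ1 z = (Complex.exp z - 1) / z)
    (h0 : φ1 0 = 1) :
    (1 - 2 * φ1 0 = -1) ∧
    ‖1 - 2 * φ1 0‖ = 1 ∧
    ∃ ω : ℝ, ω ≠ 0 ∧ 1 < ‖1 - 2 * φ1 (Complex.I * ω)‖ := by
  refine ⟨by rw [h0]; norm_num, by rw [h0]; norm_num, Real.pi, Real.pi_ne_zero, ?_⟩
  have hIπ : I * (Real.pi : ℂ) ≠ 0 := mul_ne_zero I_ne_zero (ofReal_ne_zero.2 Real.pi_ne_zero)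
  rw [h1 _ hIπ, one_sub_two_mul_exp_I_mul_sub_one_div Real.pi_ne_zero,
    Real.sin_pi, Real.cos_pi, mul_zero, zero_div, sub_zero, ofReal_one]
  exact one_lt_norm_one_add_mul_I (by norm_num [Real.pi_ne_zero])
end
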